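/- Let f : A → B be a homomorphism of commutative rings and J an ideal of B. Let p_B : A⋈^f J → B be the restriction of the second projection of A × B. Then the image of p_B equals the subring f(A)+J = {f(a)+j : a ∈ A, j ∈ J} of B, the kernel of p_B equals f⁻¹(J) × {0} = {(a, 0) : a ∈ A, f(a) ∈ J}, and consequently the quotient (A⋈^f J)/(f⁻¹(J) × {0}) is isomorphic as a ring to f(A)+J. -/

import Mathlib

/-- The amalgamation `A ⋈^f J = {(a, f a + j) | a ∈ A, j ∈ J}` of `A` with `B`
along the ideal `J` of `B`, with respect to the ring homomorphism `f : A → B`,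
as a subring of the product ring `A × B`. -/
def amalgamation {A B : Type*} [CommRing A] [CommRing B] (f : A →+* B) (J : Ideal B) :
    Subring (A × B) where
  carrier := {x : A × B | ∃ a : A, ∃ j ∈ J, x = (a, f a + j)}
  one_mem' := ⟨1, 0, J.zero_mem, by simp [Prod.ext_iff]⟩
  zero_mem' := ⟨0, 0, J.zero_mem, by simp [Prod.ext_iff]⟩
  mul_mem' := by
    rintro x y ⟨a, j, hj, rfl⟩ ⟨c, k, hk, rfl⟩
    refine ⟨a * c, f a * k + j * f c + j * k,
      J.add_mem (J.add_mem (J.mul_mem_left _ hk) (J.mul_mem_right _ hj)) (J.mul_mem_right _ hj),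
      ?_⟩
    simp only [Prod.mk_mul_mk, map_mul, Prod.mk.injEq]
    exact ⟨trivial, by ring⟩
  add_mem' := by
    rintro x y ⟨a, j, hj, rfl⟩ ⟨c, k, hk, rfl⟩
    refine ⟨a + c, j + k, J.add_mem hj hk, ?_⟩
    simp only [Prod.mk_add_mk, map_add, Prod.mk.injEq]
    exact ⟨trivial, by ring⟩
  neg_mem' := by
    rintro x ⟨a, j, hj, rfl⟩
    refine ⟨-a, -j, J.neg_mem hj, ?_⟩
    simp only [Prod.neg_mk, map_neg, Prod.mk.injEq]
    exact ⟨trivial, by ring⟩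

/-- The subring `f(A) + J = {f a + j | a ∈ A, j ∈ J}` of `B`. -/
def imageAddIdeal {A B : Type*} [CommRing A] [CommRing B] (f : A →+* B) (J : Ideal B) :
    Subring B where
  carrier := {b : B | ∃ a : A, ∃ j ∈ J, b = f a + j}
  one_mem' := ⟨1, 0, J.zero_mem, by simp⟩
  zero_mem' := ⟨0, 0, J.zero_mem, by simp⟩
  mul_mem' := by
    rintro x y ⟨a, j, hj, rfl⟩ ⟨c, k, hk, rfl⟩
    exact ⟨a * c, f a * k + j * f c + j * k,
      J.add_mem (J.add_mem (J.mul_mem_left _ hk) (J.mul_mem_right _ hj)) (J.mul_mem_right _ hj),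
      by rw [map_mul]; ring⟩
  add_mem' := by
    rintro x y ⟨a, j, hj, rfl⟩ ⟨c, k, hk, rfl⟩
    exact ⟨a + c, j + k, J.add_mem hj hk, by rw [map_add]; ring⟩
  neg_mem' := by
    rintro x ⟨a, j, hj, rfl⟩
    exact ⟨-a, -j, J.neg_mem hj, by rw [map_neg]; ring⟩

/-- The second projection `p_B : A ⋈^f J → B`. -/
def amalgProjB {A B : Type*} [CommRing A] [CommRing B] (f : A →+* B) (J : Ideal B) :
    ↥(amalgamation f J) →+* B :=
  (RingHom.snd A B).comp (amalgamation f J).subtype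

section

variable {A B : Type*} [CommRing A] [CommRing B] (f : A →+* B) (J : Ideal B)

theorem amalgamation_mem_iff (x : A × B) : x ∈ amalgamation f J ↔ x.2 - f x.1 ∈ J := by
  constructor
  · rintro ⟨a, j, hj, rfl⟩
    simpa using hj
  · intro hx
    exact ⟨x.1, x.2 - f x.1, hx, by simp⟩

theorem amalgProjB_range : (amalgProjB f J).range = imageAddIdeal f J := by
  ext b
  constructor
  · rintro ⟨⟨_, a, j, hj, rfl⟩, rfl⟩
    exact ⟨a, j, hj, rfl⟩
  · rintro ⟨a, j, hj, rfl⟩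
    exact ⟨⟨(a, f a + j), a, j, hj, rfl⟩, rfl⟩

theorem mem_ker_amalgProjB_iff (x : amalgamation f J) :
    x ∈ RingHom.ker (amalgProjB f J) ↔ ∃ a : A, f a ∈ J ∧ (x : A × B) = (a, 0) := by
  obtain ⟨⟨a, b⟩, hx⟩ := x
  rw [amalgamation_mem_iff] at hx
  change b = 0 ↔ _
  constructor
  · rintro rfl
    exact ⟨a, by simpa using J.neg_mem hx, rfl⟩
  · rintro ⟨_, _, h⟩
    exact (Prod.ext_iff.mp h).2

noncomputable def quotientKerAmalgProjBEquiv :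
    (amalgamation f J ⧸ RingHom.ker (amalgProjB f J)) ≃+* imageAddIdeal f J :=
  (RingHom.quotientKerEquivRange (amalgProjB f J)).trans
    (RingEquiv.subringCongr (amalgProjB_range f J))

end

theorem statement2 {A B : Type*} [CommRing A] [CommRing B] (f : A →+* B) (J : Ideal B) :
    (amalgProjB f J).range = imageAddIdeal f J ∧
    (∀ x : amalgamation f J,
      x ∈ RingHom.ker (amalgProjB f J) ↔ ∃ a : A, f a ∈ J ∧ (x : A × B) = (a, 0)) ∧
    Nonempty ((↥(amalgamation f J) ⧸ RingHom.ker (amalgProjB f J)) ≃+* ↥(imageAddIdeal f J)) :=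
  ⟨amalgProjB_range f J, mem_ker_amalgProjB_iff f J, ⟨quotientKerAmalgProjBEquiv f J⟩⟩
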